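/- Let n = r₁ + ⋯ + r_d with each r_j ≥ 1 and let R_j = {0}^{r₁+⋯+r_{j−1}} × ℝ^{r_j} × {0}^{r_{j+1}+⋯+r_d} be the j-th coordinate block of ℝ^n; let p̂_j denote the orthogonal projection onto ⊕_{i≠j} R_i. Let J ⊆ {1,…,d} be nonempty and let F be a subspace of ℝ^n with dim(F) < #J. Then there exists j ∈ J such that for all X ∈ F, ‖p̂_j(X)‖ ≥ ‖X‖/√(n²+1). -/

import Mathlib

/-!
If the claim fails, every `j ∈ J` has some `X_j ∈ F` with `‖p̂_j X_j‖ < ‖X_j‖ / √(n² + 1)`.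
Writing `P_j = 1 - p̂_j` for the projection onto the `j`-th block, Pythagoras turns this into
`n ‖p̂_j X_j‖ < ‖P_j X_j‖`, while `‖P_i X_j‖ ≤ ‖p̂_j X_j‖` for `i ≠ j` because the blocks are
disjoint. As `#J ≤ d ≤ n`, the array of block components `(P_i X_j)` is then strictly diagonally
dominant in each column, so the `X_j` are linearly independent and `#J ≤ dim F`.
-/

noncomputable section

open Finset

/-- Coordinate `i` of `ℝⁿ` (with `n = r₀ + ⋯ + r_{d−1}`) belongs to the `j`-th
coordinate block. -/
def InBlock {d : ℕ} (r : Fin d → ℕ) (j : Fin d) (i : ℕ) : Prop :=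
  (∑ l ∈ Finset.univ.filter (fun l => l < j), r l) ≤ i ∧
    i < ∑ l ∈ Finset.univ.filter (fun l => l ≤ j), r l

instance {d : ℕ} (r : Fin d → ℕ) (j : Fin d) (i : ℕ) : Decidable (InBlock r j i) :=
  inferInstanceAs (Decidable (_ ∧ _))

/-- The orthogonal projection `p̂_j` of `ℝⁿ` onto the sum of all coordinate blocks other
than the `j`-th: it sets to zero the coordinates of the `j`-th block. -/
def projHat (n d : ℕ) (r : Fin d → ℕ) (j : Fin d) (x : EuclideanSpace ℝ (Fin n)) :
    EuclideanSpace ℝ (Fin n) :=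
  WithLp.toLp 2 (fun i : Fin n => if InBlock r j (i : ℕ) then 0 else x i)

theorem linearIndependent_of_sum_norm_lt_diag {ι 𝕜 E G : Type*} [Fintype ι] [DecidableEq ι]
    [NormedField 𝕜] [AddCommGroup E] [Module 𝕜 E] [SeminormedAddCommGroup G] [NormedSpace 𝕜 G]
    (P : ι → E →ₗ[𝕜] G) (v : ι → E)
    (h : ∀ l, ∑ j ∈ univ.erase l, ‖P j (v l)‖ < ‖P l (v l)‖) :
    LinearIndependent 𝕜 v := by
  rw [Fintype.linearIndependent_iff]
  intro g hg
  have row : ∀ j, ‖g j‖ * ‖P j (v j)‖ ≤ ∑ l ∈ univ.erase j, ‖g l‖ * ‖P j (v l)‖ := by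
    intro j
    have hPj : g j • P j (v j) = -∑ l ∈ univ.erase j, g l • P j (v l) := by
      rw [eq_neg_iff_add_eq_zero, add_comm, sum_erase_add _ _ (mem_univ j)]
      simpa [map_sum] using congrArg (P j) hg
    calc ‖g j‖ * ‖P j (v j)‖ = ‖g j • P j (v j)‖ := (norm_smul _ _).symm
      _ ≤ ∑ l ∈ univ.erase j, ‖g l • P j (v l)‖ := by rw [hPj, norm_neg]; exact norm_sum_le _ _
      _ = ∑ l ∈ univ.erase j, ‖g l‖ * ‖P j (v l)‖ := by simp only [norm_smul]
  -- Weighting the row inequalities by `‖g l‖` and summing contradicts column dominance.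
  by_contra! hne
  obtain ⟨i, hi⟩ := hne
  have total : ∑ l, ‖g l‖ * ‖P l (v l)‖ ≤ ∑ l, ‖g l‖ * ∑ j ∈ univ.erase l, ‖P j (v l)‖ :=
    calc ∑ l, ‖g l‖ * ‖P l (v l)‖ ≤ ∑ j, ∑ l ∈ univ.erase j, ‖g l‖ * ‖P j (v l)‖ :=
          sum_le_sum fun j _ => row j
      _ = ∑ l, ∑ j ∈ univ.erase l, ‖g l‖ * ‖P j (v l)‖ := by
          simp only [sum_erase_eq_sub (mem_univ _), sum_sub_distrib]
          rw [sum_comm]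
      _ = _ := by simp only [mul_sum]
  have strict : ∑ l, ‖g l‖ * ∑ j ∈ univ.erase l, ‖P j (v l)‖ < ∑ l, ‖g l‖ * ‖P l (v l)‖ :=
    sum_lt_sum (fun l _ => mul_le_mul_of_nonneg_left (h l).le (norm_nonneg _))
      ⟨i, mem_univ i, mul_lt_mul_of_pos_left (h i) (norm_pos_iff.2 hi)⟩
  exact total.not_gt strict

section CoordMask

variable {𝕜 ι : Type*} [RCLike 𝕜]

def coordMask (p : ι → Prop) [DecidablePred p] : EuclideanSpace 𝕜 ι →ₗ[𝕜] EuclideanSpace 𝕜 ι where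
  toFun x := WithLp.toLp 2 fun i => if p i then x i else 0
  map_add' x y := by ext i; by_cases hp : p i <;> simp [hp]
  map_smul' c x := by ext i; by_cases hp : p i <;> simp [hp]

theorem coordMask_apply (p : ι → Prop) [DecidablePred p] (x : EuclideanSpace 𝕜 ι) (i : ι) :
    coordMask p x i = if p i then x i else 0 := rfl

theorem norm_sq_coordMask_add_norm_sq_coordMask_not [Fintype ι] (p : ι → Prop) [DecidablePred p]
    (x : EuclideanSpace 𝕜 ι) :
    ‖coordMask p x‖ ^ 2 + ‖coordMask (fun i => ¬ p i) x‖ ^ 2 = ‖x‖ ^ 2 := by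
  simp only [EuclideanSpace.norm_sq_eq, coordMask_apply, ← sum_add_distrib]
  refine sum_congr rfl fun i _ => ?_
  split_ifs <;> simp

theorem norm_coordMask_le_of_imp [Fintype ι] {p q : ι → Prop} [DecidablePred p] [DecidablePred q]
    (hpq : ∀ i, p i → q i) (x : EuclideanSpace 𝕜 ι) : ‖coordMask p x‖ ≤ ‖coordMask q x‖ := by
  rw [← sq_le_sq₀ (norm_nonneg _) (norm_nonneg _)]
  simp only [EuclideanSpace.norm_sq_eq, coordMask_apply]
  refine sum_le_sum fun i _ => ?_
  by_cases hp : p i <;> simp [hp, hpq i]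

theorem mul_norm_coordMask_not_lt [Fintype ι] {p : ι → Prop} [DecidablePred p]
    {x : EuclideanSpace 𝕜 ι} {m : ℝ} (h : ‖coordMask (fun i => ¬ p i) x‖ < ‖x‖ / √(m ^ 2 + 1)) :
    m * ‖coordMask (fun i => ¬ p i) x‖ < ‖coordMask p x‖ := by
  set a := ‖coordMask (fun i => ¬ p i) x‖
  have ha : 0 ≤ a := norm_nonneg _
  have hsq : (a * √(m ^ 2 + 1)) ^ 2 < ‖x‖ ^ 2 := by
    gcongr
    exact (lt_div_iff₀ (by positivity)).1 h
  rw [mul_pow, Real.sq_sqrt (by positivity), ← norm_sq_coordMask_add_norm_sq_coordMask_not p x]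
    at hsq
  exact lt_of_pow_lt_pow_left₀ 2 (norm_nonneg _) (by nlinarith)

end CoordMask

section Blocks

variable {d : ℕ} (r : Fin d → ℕ)

theorem sum_filter_le_le_sum_filter_lt {j l : Fin d} (hjl : j < l) :
    ∑ k ∈ univ.filter (fun k => k ≤ j), r k ≤ ∑ k ∈ univ.filter (fun k => k < l), r k :=
  sum_le_sum_of_subset fun k hk => by
    simp only [mem_filter, mem_univ, true_and] at hk ⊢
    exact hk.trans_lt hjl

theorem InBlock.not_inBlock_of_ne {j l : Fin d} {i : ℕ} (hj : InBlock r j i) (hjl : j ≠ l) :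
    ¬ InBlock r l i := by
  intro hl
  rcases hjl.lt_or_gt with hlt | hlt
  · have := sum_filter_le_le_sum_filter_lt r hlt
    exact (hj.2.trans_le this).not_ge hl.1
  · have := sum_filter_le_le_sum_filter_lt r hlt
    exact (hl.2.trans_le this).not_ge hj.1

abbrev blockProj (n : ℕ) (j : Fin d) : EuclideanSpace ℝ (Fin n) →ₗ[ℝ] EuclideanSpace ℝ (Fin n) :=
  coordMask fun i => InBlock r j i

theorem projHat_eq_coordMask (n : ℕ) (j : Fin d) (x : EuclideanSpace ℝ (Fin n)) :
    projHat n d r j x = coordMask (fun i : Fin n => ¬ InBlock r j i) x := by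
  ext i
  by_cases h : InBlock r j i <;> simp [projHat, coordMask_apply, h]

theorem norm_blockProj_le_norm_projHat {n : ℕ} {j l : Fin d} (hjl : j ≠ l)
    (x : EuclideanSpace ℝ (Fin n)) : ‖blockProj r n j x‖ ≤ ‖projHat n d r l x‖ := by
  rw [projHat_eq_coordMask]
  exact norm_coordMask_le_of_imp (fun _ hi => hi.not_inBlock_of_ne r hjl) x

theorem mul_norm_projHat_lt_norm_blockProj {n : ℕ} {j : Fin d} {x : EuclideanSpace ℝ (Fin n)}
    {m : ℝ} (h : ‖projHat n d r j x‖ < ‖x‖ / √(m ^ 2 + 1)) :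
    m * ‖projHat n d r j x‖ < ‖blockProj r n j x‖ := by
  rw [projHat_eq_coordMask] at h ⊢
  exact mul_norm_coordMask_not_lt h

end Blocks

theorem statement13_general (d n : ℕ) (r : Fin d → ℕ) (hr : ∀ j, 1 ≤ r j) (hn : n = ∑ j, r j)
    (J : Finset (Fin d))
    (F : Submodule ℝ (EuclideanSpace ℝ (Fin n)))
    (hF : Module.finrank ℝ F < J.card) :
    ∃ j ∈ J, ∀ X ∈ F,
      ‖X‖ / Real.sqrt ((n : ℝ) ^ 2 + 1) ≤ ‖projHat n d r j X‖ := by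
  by_contra! h
  choose X hXF hX using h
  let v : J → EuclideanSpace ℝ (Fin n) := fun j => X j j.2
  have hJn : #J ≤ n := (card_le_univ J).trans <| by
    simpa [hn] using card_nsmul_le_sum univ r 1 fun j _ => hr j
  have dominant (l : J) :
      ∑ j ∈ univ.erase l, ‖blockProj r n j (v l)‖ < ‖blockProj r n l (v l)‖ :=
    calc ∑ j ∈ univ.erase l, ‖blockProj r n j (v l)‖
        ≤ ∑ _j ∈ univ.erase l, ‖projHat n d r l (v l)‖ := sum_le_sum fun j hj =>
          norm_blockProj_le_norm_projHat r (Subtype.coe_ne_coe.2 (ne_of_mem_erase hj)) _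
      _ ≤ n * ‖projHat n d r l (v l)‖ := by
          rw [sum_const, nsmul_eq_mul]
          gcongr
          exact_mod_cast card_erase_le.trans (by simpa using hJn)
      _ < ‖blockProj r n l (v l)‖ := mul_norm_projHat_lt_norm_blockProj r (hX l l.2)
  have hv : LinearIndependent ℝ v :=
    linearIndependent_of_sum_norm_lt_diag (fun j : J => blockProj r n j) v dominant
  have hspan : Submodule.span ℝ (Set.range v) ≤ F :=
    Submodule.span_le.2 (Set.range_subset_iff.2 fun j => hXF j j.2)
  have hcard := (finrank_span_eq_card hv).symm.trans_le (Submodule.finrank_mono hspan)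
  exact hF.not_ge (by simpa using hcard)

/-- If `F` is a subspace of `ℝⁿ` with `dim F < #J`, there is `j ∈ J` such
that `‖p̂_j(X)‖ ≥ ‖X‖/√(n²+1)` for all `X ∈ F`. -/
theorem statement13 (d n : ℕ) (r : Fin d → ℕ) (hr : ∀ j, 1 ≤ r j) (hn : n = ∑ j, r j)
    (J : Finset (Fin d)) (hJ : J.Nonempty)
    (F : Submodule ℝ (EuclideanSpace ℝ (Fin n)))
    (hF : Module.finrank ℝ F < J.card) :
    ∃ j ∈ J, ∀ X ∈ F,
      ‖X‖ / Real.sqrt ((n : ℝ) ^ 2 + 1) ≤ ‖projHat n d r j X‖ :=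
  statement13_general d n r hr hn J F hF
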